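/- arXiv:1605.08863 — 3 statements merged into one kernel-verified Lean document; each statement's English description precedes it below -/
import Mathlib

section
/- In the equation gadget digraph on 6 vertices constructed for a 3-variable linear equation mod 2 (Figure 2 construction), there are exactly four directed cycles of length 3, and these four cycles are in bijection with the four satisfying assignments of the equation x_1 + x_2 + x_3 ≡ 1 (mod 2). -/
/-- The vertex set of the equation gadget: two vertices `(i, a)` per variable `xᵢ`
(`i : Fin 3`), labeled by the value `a : ZMod 2`. -/
abbrev GadgetV : Type := Fin 3 × ZMod 2

/-- The arcs of the equation gadget for `x₁ + x₂ + x₃ ≡ 1 (mod 2)` (Figure 2). -/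
def gadgetArcs : Finset (GadgetV × GadgetV) :=
  { ((0, 0), (1, 0)), ((0, 0), (2, 0)), ((0, 0), (2, 1)),
    ((0, 1), (1, 0)), ((0, 1), (1, 1)), ((0, 1), (2, 0)),
    ((1, 0), (0, 0)), ((1, 0), (0, 1)), ((1, 0), (2, 0)),
    ((1, 1), (0, 0)), ((1, 1), (2, 1)),
    ((2, 0), (0, 1)), ((2, 0), (1, 1)),
    ((2, 1), (0, 1)), ((2, 1), (1, 0)) }

/-- The arc relation of the equation gadget. -/
def gadgetArc (u v : GadgetV) : Prop := (u, v) ∈ gadgetArcs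

instance : DecidablePred fun p : GadgetV × GadgetV × GadgetV =>
    gadgetArc p.1 p.2.1 ∧ gadgetArc p.2.1 p.2.2 ∧ gadgetArc p.2.2 p.1 ∧ p.1.1 = 0 := by
  unfold gadgetArc; infer_instance


set_option maxRecDepth 10000
set_option synthInstance.maxHeartbeats 1000000
set_option synthInstance.maxSize 1000

abbrev GadgetCyc := {p : GadgetV × GadgetV × GadgetV //
    gadgetArc p.1 p.2.1 ∧ gadgetArc p.2.1 p.2.2 ∧ gadgetArc p.2.2 p.1 ∧ p.1.1 = 0}

abbrev GadgetSat := {a : Fin 3 → ZMod 2 // a 0 + a 1 + a 2 = 1}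

instance : DecidablePred fun a : Fin 3 → ZMod 2 => a 0 + a 1 + a 2 = 1 := fun _ => by
  infer_instance

def gadgetAssign (p : GadgetV × GadgetV × GadgetV) (i : Fin 3) : ZMod 2 :=
  if p.1.1 = i then p.1.2 else if p.2.1.1 = i then p.2.1.2 else p.2.2.2

abbrev Cond (p : GadgetV × GadgetV × GadgetV) : Prop :=
  (p.1, p.2.1) ∈ gadgetArcs ∧ (p.2.1, p.2.2) ∈ gadgetArcs ∧ (p.2.2, p.1) ∈ gadgetArcs ∧ p.1.1 = 0

lemma gadgetAssign_sat' : ∀ p, Cond p →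
    gadgetAssign p 0 + gadgetAssign p 1 + gadgetAssign p 2 = 1 := by decide

lemma gadgetAssign_inj' : ∀ p q, Cond p → Cond q →
    gadgetAssign p = gadgetAssign q → p = q := by decide

lemma gadgetAssign_mem' : ∀ p, Cond p → ∀ i : Fin 3,
    ((i, gadgetAssign p i) : GadgetV) = p.1 ∨ (i, gadgetAssign p i) = p.2.1 ∨
      (i, gadgetAssign p i) = p.2.2 := by decide

def gadgetF (p : GadgetCyc) : GadgetSat := ⟨gadgetAssign p.1, gadgetAssign_sat' p.1 p.2⟩

lemma gadgetF_bij : Function.Bijective gadgetF := by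
  rw [Fintype.bijective_iff_injective_and_card]
  refine ⟨fun a b h => Subtype.ext (gadgetAssign_inj' a.1 b.1 a.2 b.2 (congrArg Subtype.val h)), by decide⟩

/-- In the equation gadget for `x₁ + x₂ + x₃ ≡ 1 (mod 2)`: every directed 3-cycle
uses exactly one vertex per variable; there are exactly four directed 3-cycles
(each counted once via its unique representative starting at a vertex of `x₁`);
and these four cycles are in bijection with the four satisfying assignments of
the equation, the cycle corresponding to assignment `a` passing through the
vertices `(i, a i)`. -/

theorem gadget_cycles_are_satisfying_assignments :
    (∀ u v w : GadgetV, u ≠ v → v ≠ w → u ≠ w →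
      gadgetArc u v → gadgetArc v w → gadgetArc w u →
      ({u.1, v.1, w.1} : Finset (Fin 3)) = Finset.univ) ∧
    (Finset.univ.filter (fun p : GadgetV × GadgetV × GadgetV =>
      gadgetArc p.1 p.2.1 ∧ gadgetArc p.2.1 p.2.2 ∧ gadgetArc p.2.2 p.1 ∧
        p.1.1 = 0)).card = 4 ∧
    ∃ e : {p : GadgetV × GadgetV × GadgetV //
        gadgetArc p.1 p.2.1 ∧ gadgetArc p.2.1 p.2.2 ∧ gadgetArc p.2.2 p.1 ∧
          p.1.1 = 0} ≃
        {a : Fin 3 → ZMod 2 // a 0 + a 1 + a 2 = 1},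
      ∀ p, ∀ i : Fin 3,
        ((i, (e p).1 i) : GadgetV) ∈ ({p.1.1, p.1.2.1, p.1.2.2} : Set GadgetV) := by
  refine ⟨?_, by decide, Equiv.ofBijective gadgetF gadgetF_bij, ?_⟩
  · unfold gadgetArc
    decide
  · intro p i
    simp only [Equiv.ofBijective_apply, Set.mem_insert_iff, Set.mem_singleton_iff]
    exact gadgetAssign_mem' p.1 p.2 i
end

section
/- Completeness of the Max-Size-3-Exchange reduction: given a 3-dimensional matching instance with 200k triples where each element appears in exactly 2 triples, and a matching T' of size at least (98 − ε)k, the constructed graph contains a collection of vertex-disjoint 3-cycles of size at least 200k·3 + (98 − ε)k = (698 − ε)k cycles, by choosing for each triple in T' its triple cycle plus its three down cycles, and for each other triple its three upper cycles. -/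
/-- Completeness of the Max-Size-3-Exchange reduction. `ι` indexes the `200k`
triples of a 3-dimensional matching instance; `disjTriple i i'` means the triples
`i` and `i'` are disjoint, and `M` is a matching of size at least `(98-ε)k`.
For each triple `i`, the gadget contributes 7 cycles with vertex sets
`cyc i a` for `a : Fin 7`: the triple cycle (`a = 0`), three down cycles
(`a ∈ {1,2,3}`) and three upper cycles (`a ∈ {4,5,6}`). Given the gadget
disjointness structure (triple and down cycles mutually disjoint within a gadget;
upper cycles mutually disjoint within a gadget; upper cycles and the triple cycle
disjoint from every cycle of any other gadget; down cycles of different gadgets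
disjoint whenever the triples are disjoint), there is a vertex-disjoint collection
of at least `200k·3 + (98-ε)k = (698-ε)k` cycles, obtained by choosing for each
matched triple its triple cycle plus its three down cycles, and for every other
triple its three upper cycles. -/
theorem maxsize_completeness {ι V : Type*} [Fintype ι] [DecidableEq ι]
    [DecidableEq V] (k : ℕ) (ε : ℝ)
    (hι : Fintype.card ι = 200 * k)
    (disjTriple : ι → ι → Prop) (M : Finset ι)
    (hM : ∀ i ∈ M, ∀ i' ∈ M, i ≠ i' → disjTriple i i')
    (hMcard : ((98 - ε) * k : ℝ) ≤ M.card)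
    (cyc : ι → Fin 7 → Finset V)
    (hlow : ∀ i, ∀ a b : Fin 7, a ≤ 3 → b ≤ 3 → a ≠ b → Disjoint (cyc i a) (cyc i b))
    (hup : ∀ i, ∀ a b : Fin 7, 4 ≤ a → 4 ≤ b → a ≠ b → Disjoint (cyc i a) (cyc i b))
    (hupCross : ∀ i i' : ι, i ≠ i' → ∀ a b : Fin 7, 4 ≤ a →
      Disjoint (cyc i a) (cyc i' b))
    (htripleCross : ∀ i i' : ι, i ≠ i' → ∀ b : Fin 7,
      Disjoint (cyc i 0) (cyc i' b))
    (hdownCross : ∀ i i' : ι, i ≠ i' → disjTriple i i' → ∀ a b : Fin 7,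
      1 ≤ a → a ≤ 3 → 1 ≤ b → b ≤ 3 → Disjoint (cyc i a) (cyc i' b)) :
    ∃ C : Finset (ι × Fin 7),
      (∀ p ∈ C, ∀ q ∈ C, p ≠ q → Disjoint (cyc p.1 p.2) (cyc q.1 q.2)) ∧
      ((200 * k : ℝ) * 3 + (98 - ε) * k ≤ C.card) := by
  classical
  refine ⟨M ×ˢ ({0,1,2,3} : Finset (Fin 7)) ∪ Mᶜ ×ˢ ({4,5,6} : Finset (Fin 7)), ?_, ?_⟩
  · intro p hp q hq hpq
    have hmem : ∀ r : ι × Fin 7,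
        r ∈ M ×ˢ ({0,1,2,3} : Finset (Fin 7)) ∪ Mᶜ ×ˢ ({4,5,6} : Finset (Fin 7)) →
        (r.1 ∈ M ∧ (r.2 = 0 ∨ r.2 = 1 ∨ r.2 = 2 ∨ r.2 = 3)) ∨
        (r.1 ∉ M ∧ (r.2 = 4 ∨ r.2 = 5 ∨ r.2 = 6)) := by
      intro r hr
      simpa [Finset.mem_union, Finset.mem_product, Finset.mem_insert] using hr
    have hp' := hmem p hp
    have hq' := hmem q hq
    by_cases hii : p.1 = q.1
    · -- same gadget
      have hab : p.2 ≠ q.2 := fun h => hpq (Prod.ext hii h)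
      rcases hp' with ⟨hp1, hp2⟩ | ⟨hp1, hp2⟩ <;> rcases hq' with ⟨hq1, hq2⟩ | ⟨hq1, hq2⟩
      · rw [hii]; exact hlow q.1 p.2 q.2 (by rcases hp2 with h|h|h|h <;> simp [h])
          (by rcases hq2 with h|h|h|h <;> simp [h]) hab
      · exact absurd (hii ▸ hp1) hq1
      · exact absurd (hii ▸ hq1) hp1
      · rw [hii]; exact hup q.1 p.2 q.2 (by rcases hp2 with h|h|h <;> simp [h])
          (by rcases hq2 with h|h|h <;> simp [h]) hab
    · -- different gadgets
      rcases hp' with ⟨hp1, hp2⟩ | ⟨hp1, hp2⟩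
      · rcases hp2 with h0 | hp2
        · rw [h0]; exact htripleCross p.1 q.1 hii q.2
        · rcases hq' with ⟨hq1, hq2⟩ | ⟨hq1, hq2⟩
          · rcases hq2 with h0 | hq2
            · rw [h0]; exact (htripleCross q.1 p.1 (Ne.symm hii) p.2).symm
            · exact hdownCross p.1 q.1 hii (hM _ hp1 _ hq1 hii) p.2 q.2
                (by rcases hp2 with h|h|h <;> simp [h])
                (by rcases hp2 with h|h|h <;> simp [h])
                (by rcases hq2 with h|h|h <;> simp [h])
                (by rcases hq2 with h|h|h <;> simp [h])
          · exact (hupCross q.1 p.1 (Ne.symm hii) q.2 p.2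
              (by rcases hq2 with h|h|h <;> simp [h])).symm
      · exact hupCross p.1 q.1 hii p.2 q.2 (by rcases hp2 with h|h|h <;> simp [h])
  · have hdisj : Disjoint (M ×ˢ ({0,1,2,3} : Finset (Fin 7)))
        (Mᶜ ×ˢ ({4,5,6} : Finset (Fin 7))) := by
      rw [Finset.disjoint_left]
      rintro ⟨i, a⟩ h1 h2
      simp only [Finset.mem_product, Finset.mem_compl] at h1 h2
      exact h2.1 h1.1
    rw [Finset.card_union_of_disjoint hdisj, Finset.card_product, Finset.card_product]
    have hcompl : Mᶜ.card = 200 * k - M.card := by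
      rw [Finset.card_compl, hι]
    have hMle : M.card ≤ 200 * k := by
      have := Finset.card_le_univ M
      rwa [hι] at this
    have hcard4 : (({0,1,2,3} : Finset (Fin 7))).card = 4 := by decide
    have hcard3 : (({4,5,6} : Finset (Fin 7))).card = 3 := by decide
    rw [hcard4, hcard3, hcompl]
    have : M.card * 4 + (200 * k - M.card) * 3 = 600 * k + M.card := by omega
    rw [this]
    push_cast
    linarith
end

section
/- Soundness adjustment lemma for the Max-Size-3-Exchange reduction: any vertex-disjoint cycle collection C in the constructed graph can be modified, without decreasing the number of cycles, so that within each triple gadget either exactly the three upper cycles are chosen, or exactly the triple cycle together with the three down cycles are chosen. Consequently, if |C| ≥ (697 + ε)k then at least (97 + ε)k gadgets are of the second type, and the corresponding triples form a matching of size at least (97 + ε)k. -/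
/-- Soundness adjustment for the Max-Size-3-Exchange reduction. `ι` indexes the
`200k` triple gadgets; gadget `i` has 7 cycles with vertex sets `cyc i a`:
the triple cycle (`a = 0`), three down cycles (`a ∈ {1,2,3}`), three upper cycles
(`a ∈ {4,5,6}`). Hypotheses: within each gadget at most 4 pairwise disjoint cycles
can be selected, and 4 only by selecting exactly the triple cycle with the three
down cycles; the upper cycles of a gadget are pairwise disjoint and disjoint from
cycles of other gadgets; and if two triples are not disjoint then some pair of
their down cycles intersect. Conclusion: any vertex-disjoint collection `C` of
gadget cycles can be modified, without decreasing its size, into a vertex-disjoint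
collection `C'` in which each gadget carries either exactly its three upper cycles
or exactly its triple cycle plus three down cycles; and if `|C| ≥ (697+ε)k` then
the fully matched gadgets yield a set `M` of at least `(97+ε)k` pairwise disjoint
triples. -/
theorem maxsize_soundness_adjustment {ι V : Type*} [Fintype ι] [DecidableEq ι]
    [DecidableEq V] (k : ℕ) (ε : ℝ)
    (hι : Fintype.card ι = 200 * k)
    (disjTriple : ι → ι → Prop)
    (cyc : ι → Fin 7 → Finset V)
    (hgadgetBound : ∀ i : ι, ∀ S : Finset (Fin 7),
      (∀ a ∈ S, ∀ b ∈ S, a ≠ b → Disjoint (cyc i a) (cyc i b)) →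
      S.card ≤ 4 ∧ (S.card = 4 → S = {0, 1, 2, 3}))
    (hup : ∀ i, ∀ a b : Fin 7, 4 ≤ a → 4 ≤ b → a ≠ b → Disjoint (cyc i a) (cyc i b))
    (hupCross : ∀ i i' : ι, i ≠ i' → ∀ a b : Fin 7, 4 ≤ a →
      Disjoint (cyc i a) (cyc i' b))
    (hshared : ∀ i i' : ι, i ≠ i' → ¬ disjTriple i i' →
      ∃ a b : Fin 7, 1 ≤ a ∧ a ≤ 3 ∧ 1 ≤ b ∧ b ≤ 3 ∧
        ¬ Disjoint (cyc i a) (cyc i' b))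
    (C : Finset (ι × Fin 7))
    (hC : ∀ p ∈ C, ∀ q ∈ C, p ≠ q → Disjoint (cyc p.1 p.2) (cyc q.1 q.2)) :
    ∃ C' : Finset (ι × Fin 7),
      (∀ p ∈ C', ∀ q ∈ C', p ≠ q → Disjoint (cyc p.1 p.2) (cyc q.1 q.2)) ∧
      C.card ≤ C'.card ∧
      (∀ i : ι, ((C'.filter (fun p => p.1 = i)).image Prod.snd = ({4, 5, 6} : Finset (Fin 7)) ∨
        (C'.filter (fun p => p.1 = i)).image Prod.snd = ({0, 1, 2, 3} : Finset (Fin 7)))) ∧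
      (((697 + ε) * k : ℝ) ≤ C.card →
        ∃ M : Finset ι, (∀ i ∈ M, ∀ i' ∈ M, i ≠ i' → disjTriple i i') ∧
          ((97 + ε) * k : ℝ) ≤ M.card) := by
  classical
  set F : ι → Finset (ι × Fin 7) := fun i => C.filter (fun p => p.1 = i) with hF
  -- image of snd of fiber is pairwise disjoint
  have hdisjS : ∀ i, ∀ a ∈ (F i).image Prod.snd, ∀ b ∈ (F i).image Prod.snd,
      a ≠ b → Disjoint (cyc i a) (cyc i b) := by
    intro i a ha b hb hab
    simp only [hF, Finset.mem_image, Finset.mem_filter] at ha hb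
    obtain ⟨p, ⟨hpC, hp1⟩, hp2⟩ := ha
    obtain ⟨q, ⟨hqC, hq1⟩, hq2⟩ := hb
    have hpq : p ≠ q := by
      intro h; apply hab; rw [← hp2, ← hq2, h]
    have := hC p hpC q hqC hpq
    rwa [hp1, hq1, hp2, hq2] at this
  have hcardim : ∀ i, ((F i).image Prod.snd).card = (F i).card := by
    intro i
    apply Finset.card_image_of_injOn
    intro p hp q hq h
    simp only [hF, Finset.mem_coe, Finset.mem_filter] at hp hq
    exact Prod.ext (hp.2.trans hq.2.symm) h
  set full : ι → Prop := fun i => (F i).image Prod.snd = ({0,1,2,3} : Finset (Fin 7))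
    with hfulldef
  have hfullmem : ∀ i, full i → ∀ a ∈ ({0,1,2,3} : Finset (Fin 7)), (i, a) ∈ C := by
    intro i hfi a ha
    rw [hfulldef] at hfi
    rw [← hfi, Finset.mem_image] at ha
    obtain ⟨p, hp, hp2⟩ := ha
    simp only [hF, Finset.mem_filter] at hp
    have : p = (i, a) := Prod.ext hp.2 hp2
    rw [← this]; exact hp.1
  have hbound : ∀ i, (F i).card ≤ 4 := by
    intro i
    rw [← hcardim]
    exact (hgadgetBound i _ (hdisjS i)).1
  have hbound3 : ∀ i, ¬ full i → (F i).card ≤ 3 := by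
    intro i hnf
    by_contra h
    push_neg at h
    have h4 : (F i).card = 4 := le_antisymm (hbound i) h
    apply hnf
    rw [hfulldef]
    exact (hgadgetBound i _ (hdisjS i)).2 (by rw [hcardim]; exact h4)
  set C' : Finset (ι × Fin 7) := Finset.univ.biUnion (fun i =>
    if full i then ({i} ×ˢ ({0,1,2,3} : Finset (Fin 7)))
    else ({i} ×ˢ ({4,5,6} : Finset (Fin 7)))) with hC'
  have hmemC' : ∀ p : ι × Fin 7, p ∈ C' ↔
      (full p.1 ∧ p.2 ∈ ({0,1,2,3} : Finset (Fin 7))) ∨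
      (¬ full p.1 ∧ p.2 ∈ ({4,5,6} : Finset (Fin 7))) := by
    intro p
    rw [hC', Finset.mem_biUnion]
    constructor
    · rintro ⟨i, -, hp⟩
      by_cases hfi : full i
      · rw [if_pos hfi, Finset.mem_product, Finset.mem_singleton] at hp
        left; rw [hp.1]; exact ⟨hfi, hp.2⟩
      · rw [if_neg hfi, Finset.mem_product, Finset.mem_singleton] at hp
        right; rw [hp.1]; exact ⟨hfi, hp.2⟩
    · rintro (⟨hf, hp⟩ | ⟨hf, hp⟩)
      · refine ⟨p.1, Finset.mem_univ _, ?_⟩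
        rw [if_pos hf, Finset.mem_product, Finset.mem_singleton]
        exact ⟨rfl, hp⟩
      · refine ⟨p.1, Finset.mem_univ _, ?_⟩
        rw [if_neg hf, Finset.mem_product, Finset.mem_singleton]
        exact ⟨rfl, hp⟩
  have hge4 : ∀ a : Fin 7, a ∈ ({4,5,6} : Finset (Fin 7)) → (4 : Fin 7) ≤ a := by
    decide
  have hC'mem_full : ∀ p : ι × Fin 7, p ∈ C' → full p.1 → p ∈ C := by
    intro p hp hf
    rw [hmemC'] at hp
    rcases hp with ⟨-, hp2⟩ | ⟨hnf, -⟩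
    · have := hfullmem p.1 hf p.2 hp2
      simpa using this
    · exact absurd hf hnf
  -- disjointness of C'
  have hdisjC' : ∀ p ∈ C', ∀ q ∈ C', p ≠ q → Disjoint (cyc p.1 p.2) (cyc q.1 q.2) := by
    intro p hp q hq hpq
    by_cases hfp : full p.1
    · by_cases hfq : full q.1
      · exact hC p (hC'mem_full p hp hfp) q (hC'mem_full q hq hfq) hpq
      · -- q is upper
        have hq2 : q.2 ∈ ({4,5,6} : Finset (Fin 7)) := by
          rcases (hmemC' q).1 hq with ⟨hf, -⟩ | ⟨-, h⟩
          · exact absurd hf hfq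
          · exact h
        by_cases hij : p.1 = q.1
        · rcases (hmemC' p).1 hp with ⟨-, hp2⟩ | ⟨hnf, -⟩
          · exact absurd hfp (by rw [hij] at hfp; exact fun _ => hfq hfp)
          · exact absurd hfp hnf
        · exact (hupCross q.1 p.1 (Ne.symm hij) q.2 p.2 (hge4 q.2 hq2)).symm
    · have hp2 : p.2 ∈ ({4,5,6} : Finset (Fin 7)) := by
        rcases (hmemC' p).1 hp with ⟨hf, -⟩ | ⟨-, h⟩
        · exact absurd hf hfp
        · exact h
      by_cases hij : p.1 = q.1
      · -- same gadget, not full, both upper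
        have hfq : ¬ full q.1 := by rw [← hij]; exact hfp
        have hq2 : q.2 ∈ ({4,5,6} : Finset (Fin 7)) := by
          rcases (hmemC' q).1 hq with ⟨hf, -⟩ | ⟨-, h⟩
          · exact absurd hf hfq
          · exact h
        have hab : p.2 ≠ q.2 := by
          intro h; exact hpq (Prod.ext hij h)
        have := hup p.1 p.2 q.2 (hge4 p.2 hp2) (hge4 q.2 hq2) hab
        rw [← hij]; exact this
      · exact hupCross p.1 q.1 hij p.2 q.2 (hge4 p.2 hp2)
  -- fibers of C'
  have hfiber : ∀ i : ι, C'.filter (fun p => p.1 = i) =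
      {i} ×ˢ (if full i then ({0,1,2,3} : Finset (Fin 7)) else ({4,5,6} : Finset (Fin 7))) := by
    intro i
    ext p
    rw [Finset.mem_filter, Finset.mem_product, Finset.mem_singleton, hmemC']
    constructor
    · rintro ⟨(⟨hf, h2⟩ | ⟨hf, h2⟩), h1⟩
      · rw [h1] at hf; exact ⟨h1, by rw [if_pos hf]; exact h2⟩
      · rw [h1] at hf; exact ⟨h1, by rw [if_neg hf]; exact h2⟩
    · rintro ⟨h1, h2⟩
      refine ⟨?_, h1⟩
      by_cases hfi : full i
      · left; rw [h1]; exact ⟨hfi, by rwa [if_pos hfi] at h2⟩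
      · right; rw [h1]; exact ⟨hfi, by rwa [if_neg hfi] at h2⟩
  have hfiberim : ∀ i : ι, (C'.filter (fun p => p.1 = i)).image Prod.snd =
      (if full i then ({0,1,2,3} : Finset (Fin 7)) else ({4,5,6} : Finset (Fin 7))) := by
    intro i
    rw [hfiber i]
    ext a
    simp
  -- cardinalities
  have hcardC : C.card = ∑ i : ι, (F i).card := by
    rw [hF]
    exact Finset.card_eq_sum_card_fiberwise (fun p _ => Finset.mem_univ p.1)
  have hcardC' : C'.card = ∑ i : ι, (if full i then 4 else 3) := by
    have h0 : C'.card = ∑ i : ι, (C'.filter (fun p => p.1 = i)).card :=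
      Finset.card_eq_sum_card_fiberwise (fun p _ => Finset.mem_univ p.1)
    rw [h0]
    apply Finset.sum_congr rfl
    intro i _
    rw [hfiber i]
    by_cases hfi : full i
    · rw [if_pos hfi, if_pos hfi, Finset.card_product, Finset.card_singleton]; decide
    · rw [if_neg hfi, if_neg hfi, Finset.card_product, Finset.card_singleton]; decide
  have hcard_le : C.card ≤ C'.card := by
    rw [hcardC, hcardC']
    apply Finset.sum_le_sum
    intro i _
    by_cases hfi : full i
    · rw [if_pos hfi]; exact hbound i
    · rw [if_neg hfi]; exact hbound3 i hfi
  refine ⟨C', hdisjC', hcard_le, ?_, ?_⟩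
  · intro i
    rw [hfiberim i]
    by_cases hfi : full i
    · right; rw [if_pos hfi]
    · left; rw [if_neg hfi]
  · intro hbig
    refine ⟨Finset.univ.filter (fun i => full i), ?_, ?_⟩
    · intro i hi i' hi' hne
      rw [Finset.mem_filter] at hi hi'
      by_contra hnd
      obtain ⟨a, b, ha1, ha3, hb1, hb3, hnd'⟩ := hshared i i' hne hnd
      apply hnd'
      have hmem03 : ∀ c : Fin 7, 1 ≤ c → c ≤ 3 → c ∈ ({0,1,2,3} : Finset (Fin 7)) := by
        decide
      have hamem : a ∈ ({0,1,2,3} : Finset (Fin 7)) := hmem03 a ha1 ha3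
      have hbmem : b ∈ ({0,1,2,3} : Finset (Fin 7)) := hmem03 b hb1 hb3
      have hia : (i, a) ∈ C := hfullmem i hi.2 a hamem
      have hib : (i', b) ∈ C := hfullmem i' hi'.2 b hbmem
      have : ((i, a) : ι × Fin 7) ≠ (i', b) := by
        intro h; exact hne (congrArg Prod.fst h)
      exact hC (i, a) hia (i', b) hib this
    · set M := Finset.univ.filter (fun i => full i) with hM
      have hMle : C.card ≤ 600 * k + M.card := by
        rw [hcardC]
        calc ∑ i : ι, (F i).card ≤ ∑ i : ι, (if full i then 4 else 3) := by
              apply Finset.sum_le_sum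
              intro i _
              by_cases hfi : full i
              · rw [if_pos hfi]; exact hbound i
              · rw [if_neg hfi]; exact hbound3 i hfi
          _ = ∑ i : ι, ((if full i then 1 else 0) + 3) := by
              apply Finset.sum_congr rfl; intro i _
              by_cases hfi : full i
              · rw [if_pos hfi, if_pos hfi]
              · rw [if_neg hfi, if_neg hfi]
          _ = M.card + 3 * Fintype.card ι := by
              have hcf : (Finset.univ.filter (fun i => full i)).card
                  = ∑ i : ι, (if full i then 1 else 0) := Finset.card_filter _ _
              rw [Finset.sum_add_distrib, hM, hcf, Finset.sum_const,
                Finset.card_univ, smul_eq_mul]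
              ring
          _ = 600 * k + M.card := by rw [hι]; ring
      have h1 : (C.card : ℝ) ≤ 600 * k + M.card := by
        exact_mod_cast hMle
      have h2 : ((697 + ε) * k : ℝ) ≤ C.card := hbig
      nlinarith [h1, h2]
end
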